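/- Let n ≥ 1, 0 ≤ n₁, n₂ ≤ n with (n₁,n₂) ≠ (n,n), and let ζ ∈ ℝ^{n×n} be defined by ζ_{ij} = 2 − (2n − n₁ − n₂)/(n² − n₁n₂) if i ≤ n₁, j ≤ n₂; ζ_{ij} = 1 + n₂/(n² − n₁n₂) if i ≤ n₁, j > n₂; ζ_{ij} = 1 + n₁/(n² − n₁n₂) if i > n₁, j ≤ n₂; and ζ_{ij} = 0 otherwise. Then 0 ≤ ζ_{ij} ≤ 2 for all i, j, and Σ_{ij} ζ_{ij} = n(n₁ + n₂). -/

import Mathlib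

/-!
Because `n₁ < n` or `n₂ < n` and these are integers, `n² - n₁ n₂ ≥ n`. Every fraction in `ζ`
therefore has numerator between `0` and one (or, for the first block, two) times its
denominator, which gives the bounds. The sum is a count of the four constant blocks of `ζ`,
after which it is an identity of rational functions.
-/

open Finset

theorem Fin.sum_ite_val_lt {M : Type*} [AddCommMonoid M] {n m : ℕ} (hm : m ≤ n) (a b : M) :
    ∑ j : Fin n, (if (j : ℕ) < m then a else b) = m • a + (n - m) • b := by
  have hcard :=
    card_filter_add_card_filter_not (s := (univ : Finset (Fin n))) (fun j => (j : ℕ) < m)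
  rw [card_filter_val_lt, card_univ, Fintype.card_fin] at hcard
  rw [sum_ite, Finset.sum_const, Finset.sum_const, card_filter_val_lt]
  congr 2 <;> omega

theorem Fin.sum_sum_ite_val_lt {R : Type*} [CommRing R] {n n₁ n₂ : ℕ} (h1 : n₁ ≤ n) (h2 : n₂ ≤ n)
    (a b c d : R) :
    ∑ i : Fin n, ∑ j : Fin n,
      (if (i : ℕ) < n₁ ∧ (j : ℕ) < n₂ then a else if (i : ℕ) < n₁ then b
        else if (j : ℕ) < n₂ then c else d) =
      n₁ * (n₂ * a + (n - n₂) * b) + (n - n₁) * (n₂ * c + (n - n₂) * d) := by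
  have hrow : ∀ i : Fin n, ∑ j : Fin n,
      (if (i : ℕ) < n₁ ∧ (j : ℕ) < n₂ then a else if (i : ℕ) < n₁ then b
        else if (j : ℕ) < n₂ then c else d) =
      if (i : ℕ) < n₁ then n₂ * a + (n - n₂) * b else n₂ * c + (n - n₂) * d := by
    intro i
    by_cases hi : (i : ℕ) < n₁ <;>
      simp only [hi, true_and, false_and, if_true, if_false, Fin.sum_ite_val_lt h2, nsmul_eq_mul,
        Nat.cast_sub h2]
  simp only [hrow, Fin.sum_ite_val_lt h1, nsmul_eq_mul, Nat.cast_sub h1]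

theorem Nat.add_mul_le_sq {n n₁ n₂ : ℕ} (h1 : n₁ ≤ n) (h2 : n₂ ≤ n)
    (hne : ¬(n₁ = n ∧ n₂ = n)) : n + n₁ * n₂ ≤ n ^ 2 := by
  rcases Nat.lt_or_ge n₁ n with h | h
  · nlinarith
  · have : n₂ < n := by omega
    nlinarith

theorem Nat.cast_le_sq_sub_mul {R : Type*} [Ring R] [PartialOrder R] [IsOrderedRing R]
    {n n₁ n₂ : ℕ} (h1 : n₁ ≤ n) (h2 : n₂ ≤ n) (hne : ¬(n₁ = n ∧ n₂ = n)) :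
    (n : R) ≤ n ^ 2 - n₁ * n₂ := by
  rw [le_sub_iff_add_le]
  exact_mod_cast Nat.mono_cast (α := R) (Nat.add_mul_le_sq h1 h2 hne)

theorem one_add_div_mem_Icc {K : Type*} [Field K] [LinearOrder K] [IsStrictOrderedRing K]
    {x D : K} (hD : 0 < D) (hx₀ : 0 ≤ x) (hx : x ≤ D) : 1 + x / D ∈ Set.Icc 0 2 := by
  have := div_le_one_of_le₀ hx hD.le
  constructor <;> linarith [div_nonneg hx₀ hD.le]

theorem two_sub_div_mem_Icc {K : Type*} [Field K] [LinearOrder K] [IsStrictOrderedRing K]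
    {x D : K} (hD : 0 < D) (hx₀ : 0 ≤ x) (hx : x ≤ 2 * D) : 2 - x / D ∈ Set.Icc 0 2 := by
  have := (div_le_iff₀ hD).2 hx
  constructor <;> linarith [div_nonneg hx₀ hD.le]

theorem stmt12_general (n n₁ n₂ : ℕ) (h1 : n₁ ≤ n) (h2 : n₂ ≤ n)
    (hne : ¬(n₁ = n ∧ n₂ = n))
    (ζ : Fin n → Fin n → ℝ)
    (hζ : ∀ i j : Fin n,
      ζ i j = if (i : ℕ) < n₁ ∧ (j : ℕ) < n₂ then
          2 - (2 * n - n₁ - n₂ : ℝ) / ((n : ℝ)^2 - (n₁ : ℝ) * n₂)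
        else if (i : ℕ) < n₁ then 1 + (n₂ : ℝ) / ((n : ℝ)^2 - (n₁ : ℝ) * n₂)
        else if (j : ℕ) < n₂ then 1 + (n₁ : ℝ) / ((n : ℝ)^2 - (n₁ : ℝ) * n₂)
        else 0) :
    (∀ i j : Fin n, 0 ≤ ζ i j ∧ ζ i j ≤ 2) ∧
    (∑ i : Fin n, ∑ j : Fin n, ζ i j) = (n : ℝ) * ((n₁ : ℝ) + n₂) := by
  have hnD : (n : ℝ) ≤ n ^ 2 - n₁ * n₂ := Nat.cast_le_sq_sub_mul h1 h2 hne
  have hD : (0 : ℝ) < n ^ 2 - n₁ * n₂ :=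
    lt_of_lt_of_le (by exact_mod_cast (show 0 < n by omega)) hnD
  have h1' : (n₁ : ℝ) ≤ n := by exact_mod_cast h1
  have h2' : (n₂ : ℝ) ≤ n := by exact_mod_cast h2
  refine ⟨fun i j => ?_, ?_⟩
  · rw [hζ]
    split_ifs
    · exact two_sub_div_mem_Icc hD (by linarith) (by linarith)
    · exact one_add_div_mem_Icc hD n₂.cast_nonneg (h2'.trans hnD)
    · exact one_add_div_mem_Icc hD n₁.cast_nonneg (h1'.trans hnD)
    · exact ⟨le_rfl, zero_le_two⟩
  · simp only [hζ]
    rw [Fin.sum_sum_ite_val_lt h1 h2]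
    field_simp
    ring

theorem stmt12 (n n₁ n₂ : ℕ) (hn : 1 ≤ n) (h1 : n₁ ≤ n) (h2 : n₂ ≤ n)
    (hne : ¬(n₁ = n ∧ n₂ = n))
    (ζ : Fin n → Fin n → ℝ)
    (hζ : ∀ i j : Fin n,
      ζ i j = if (i : ℕ) < n₁ ∧ (j : ℕ) < n₂ then
          2 - (2 * n - n₁ - n₂ : ℝ) / ((n : ℝ)^2 - (n₁ : ℝ) * n₂)
        else if (i : ℕ) < n₁ then 1 + (n₂ : ℝ) / ((n : ℝ)^2 - (n₁ : ℝ) * n₂)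
        else if (j : ℕ) < n₂ then 1 + (n₁ : ℝ) / ((n : ℝ)^2 - (n₁ : ℝ) * n₂)
        else 0) :
    (∀ i j : Fin n, 0 ≤ ζ i j ∧ ζ i j ≤ 2) ∧
    (∑ i : Fin n, ∑ j : Fin n, ζ i j) = (n : ℝ) * ((n₁ : ℝ) + n₂) :=
  stmt12_general n n₁ n₂ h1 h2 hne ζ hζ
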